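/- arXiv:1309.1193 — 6 statements merged into one kernel-verified Lean document; each statement's English description precedes it below -/
import Mathlib

section
/- Let y, λ ∈ ℝ₊^M with y ≠ 0, λ ≠ 0, and supp(y) ⊆ supp(λ); set Y = ‖y‖₁ and Λ = ‖λ‖₁. Then I(y‖λ) = Y·I(y/Y ‖ λ/Λ) + I(Y‖Λ), where I(Y‖Λ) = Y·log(Y/Λ) + Λ − Y denotes the scalar I-divergence. -/
noncomputable section

/-- ℓ₁ norm of a vector. -/
def l1norm {M : ℕ} (v : Fin M → ℝ) : ℝ := ∑ j, |v j|

/-- I-divergence of nonnegative vectors (with the convention `0 · log 0 = 0`, which holds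
automatically since `Real.log 0 = 0`). -/
def Idiv {M : ℕ} (x y : Fin M → ℝ) : ℝ :=
  ∑ j, (x j * Real.log (x j / y j) + y j - x j)

/-- Lemma 1 decomposition: `I(y‖λ) = Y·I(y/Y ‖ λ/Λ) + I(Y‖Λ)` where `Y = ‖y‖₁`, `Λ = ‖λ‖₁`
and `I(Y‖Λ) = Y·log(Y/Λ) + Λ − Y` is the scalar I-divergence. -/
theorem Idiv_decomposition {M : ℕ} (y lam : Fin M → ℝ)
    (hy : ∀ j, 0 ≤ y j) (hlam : ∀ j, 0 ≤ lam j)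
    (hy0 : y ≠ 0) (hlam0 : lam ≠ 0)
    (hsupp : ∀ j, lam j = 0 → y j = 0) :
    Idiv y lam =
      l1norm y * Idiv (fun j => y j / l1norm y) (fun j => lam j / l1norm lam) +
        (l1norm y * Real.log (l1norm y / l1norm lam) + l1norm lam - l1norm y) := by
  obtain ⟨j0, hj0⟩ := Function.ne_iff.1 hy0
  obtain ⟨j1, hj1⟩ := Function.ne_iff.1 hlam0
  have hY : 0 < l1norm y :=
    Finset.sum_pos' (fun j _ => abs_nonneg _) ⟨j0, Finset.mem_univ _, abs_pos.2 hj0⟩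
  have hL : 0 < l1norm lam :=
    Finset.sum_pos' (fun j _ => abs_nonneg _) ⟨j1, Finset.mem_univ _, abs_pos.2 hj1⟩
  set Y := l1norm y with hYdef
  set L := l1norm lam with hLdef
  have hYsum : (∑ j, y j) = Y := by
    rw [hYdef, l1norm]
    exact Finset.sum_congr rfl fun j _ => (abs_of_nonneg (hy j)).symm
  have hLsum : (∑ j, lam j) = L := by
    rw [hLdef, l1norm]
    exact Finset.sum_congr rfl fun j _ => (abs_of_nonneg (hlam j)).symm
  have key : Y * Idiv (fun j => y j / Y) (fun j => lam j / L) =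
      ∑ j, (y j * Real.log (y j / lam j) + y j * Real.log (L / Y)
        + Y / L * lam j - y j) := by
    rw [Idiv, Finset.mul_sum]
    refine Finset.sum_congr rfl fun j _ => ?_
    rcases eq_or_lt_of_le (hy j) with h0 | hpos
    · simp only [← h0, zero_div, Real.log_zero, mul_zero, zero_mul, zero_add, sub_zero,
        zero_div]
      ring
    · have hlj : 0 < lam j := by
        rcases eq_or_lt_of_le (hlam j) with h | h
        · exact absurd (hsupp j h.symm) (ne_of_gt hpos)
        · exact h
      have hlog : Real.log ((y j / Y) / (lam j / L)) =
          Real.log (y j / lam j) + Real.log (L / Y) := by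
        rw [Real.log_div (by positivity) (by positivity),
            Real.log_div hpos.ne' hY.ne',
            Real.log_div hlj.ne' hL.ne',
            Real.log_div hpos.ne' hlj.ne',
            Real.log_div hL.ne' hY.ne']
        ring
      rw [hlog]
      field_simp
  rw [key, Idiv]
  simp only [Finset.sum_sub_distrib, Finset.sum_add_distrib, ← Finset.sum_mul,
    ← Finset.mul_sum, hYsum, hLsum]
  rw [Real.log_div hL.ne' hY.ne', Real.log_div hY.ne' hL.ne']
  field_simp
  ring
end
end

section
/- Let y, λ ∈ ℝ₊^M with y ≠ 0, λ ≠ 0, and supp(y) ⊆ supp(λ); set Y = ‖y‖₁ and Λ = ‖λ‖₁. Let ε > 0 and suppose I(y‖λ) ≤ ε. Then both I(y/Y ‖ λ/Λ) ≤ ε/Y and I(Y‖Λ) ≤ ε, where I(Y‖Λ) = Y·log(Y/Λ) + Λ − Y is the scalar I-divergence. -/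
noncomputable section

/-!
Splitting off the total masses `Y = ‖y‖₁`, `Λ = ‖λ‖₁` gives the chain rule
`I(y‖λ) = Y · I(y/Y ‖ λ/Λ) + I(Y‖Λ)`. Both summands are nonnegative, so each is at most
`I(y‖λ) ≤ ε`.
-/

open Real InformationTheory

def scalarIdiv (a b : ℝ) : ℝ := a * log (a / b) + b - a

lemma scalarIdiv_eq_mul_klFun {a b : ℝ} (hb : b ≠ 0) :
    scalarIdiv a b = b * klFun (a / b) := by
  rw [scalarIdiv, klFun_apply]
  field_simp

lemma scalarIdiv_nonneg {a b : ℝ} (ha : 0 ≤ a) (hb : 0 ≤ b) (hab : b = 0 → a = 0) :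
    0 ≤ scalarIdiv a b := by
  rcases hb.eq_or_lt with rfl | hb
  · simp [scalarIdiv, hab rfl]
  · rw [scalarIdiv_eq_mul_klFun hb.ne']
    exact mul_nonneg hb.le (klFun_nonneg (div_nonneg ha hb.le))

lemma Idiv_nonneg {M : ℕ} {x y : Fin M → ℝ} (hx : ∀ j, 0 ≤ x j) (hy : ∀ j, 0 ≤ y j)
    (hsupp : ∀ j, y j = 0 → x j = 0) : 0 ≤ Idiv x y :=
  Finset.sum_nonneg fun j _ => scalarIdiv_nonneg (hx j) (hy j) (hsupp j)

lemma mul_log_div_div_div {a b c d : ℝ} (hab : b = 0 → a = 0) (hc : c ≠ 0) (hd : d ≠ 0) :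
    a * log ((a / c) / (b / d)) = a * log (a / b) - a * log (c / d) := by
  rcases eq_or_ne a 0 with rfl | ha
  · simp
  have hb : b ≠ 0 := mt hab ha
  rw [div_div_div_comm, log_div (div_ne_zero ha hb) (div_ne_zero hc hd)]
  ring

lemma l1norm_eq_sum {M : ℕ} {v : Fin M → ℝ} (hv : ∀ j, 0 ≤ v j) : l1norm v = ∑ j, v j :=
  Finset.sum_congr rfl fun j _ => abs_of_nonneg (hv j)

lemma l1norm_pos {M : ℕ} {v : Fin M → ℝ} (hv : v ≠ 0) : 0 < l1norm v := by
  obtain ⟨j, hj⟩ := Function.ne_iff.mp hv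
  exact Finset.sum_pos' (fun i _ => abs_nonneg (v i)) ⟨j, Finset.mem_univ j, abs_pos.mpr hj⟩

lemma Idiv_eq_mul_Idiv_normalize_add_scalarIdiv {M : ℕ} (y lam : Fin M → ℝ)
    (hsupp : ∀ j, lam j = 0 → y j = 0) (hY : ∑ j, y j ≠ 0) (hL : ∑ j, lam j ≠ 0) :
    Idiv y lam = (∑ j, y j) * Idiv (fun j => y j / ∑ i, y i) (fun j => lam j / ∑ i, lam i)
      + scalarIdiv (∑ j, y j) (∑ j, lam j) := by
  set Y := ∑ j, y j
  set L := ∑ j, lam j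
  have hterm : ∀ j, Y * (y j / Y * log ((y j / Y) / (lam j / L)) + lam j / L - y j / Y)
      = y j * log (y j / lam j) - y j * log (Y / L) + Y / L * lam j - y j := by
    intro j
    have hcancel : Y * (y j / Y * log ((y j / Y) / (lam j / L)) + lam j / L - y j / Y)
        = y j * log ((y j / Y) / (lam j / L)) + Y / L * lam j - y j := by
      field_simp
    rw [hcancel, mul_log_div_div_div (hsupp j) hY hL]
  calc Idiv y lam
      = ∑ j, (y j * log (y j / lam j) - y j * log (Y / L) + Y / L * lam j - y j)
          + scalarIdiv Y L := by
        simp only [Idiv, scalarIdiv, Finset.sum_add_distrib, Finset.sum_sub_distrib,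
          ← Finset.sum_mul, ← Finset.mul_sum]
        field_simp
        ring
    _ = Y * Idiv (fun j => y j / Y) (fun j => lam j / L) + scalarIdiv Y L := by
        rw [Idiv, Finset.mul_sum]
        simp only [hterm]

theorem Idiv_bounds_general {M : ℕ} (y lam : Fin M → ℝ)
    (hy : ∀ j, 0 ≤ y j) (hlam : ∀ j, 0 ≤ lam j)
    (hy0 : y ≠ 0) (hlam0 : lam ≠ 0)
    (hsupp : ∀ j, lam j = 0 → y j = 0)
    (ε : ℝ)
    (h : Idiv y lam ≤ ε) :
    Idiv (fun j => y j / l1norm y) (fun j => lam j / l1norm lam) ≤ ε / l1norm y ∧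
      l1norm y * Real.log (l1norm y / l1norm lam) + l1norm lam - l1norm y ≤ ε := by
  have hYpos := l1norm_pos hy0
  have hLpos := l1norm_pos hlam0
  have hsplit := Idiv_eq_mul_Idiv_normalize_add_scalarIdiv y lam hsupp
    (l1norm_eq_sum hy ▸ hYpos.ne') (l1norm_eq_sum hlam ▸ hLpos.ne')
  rw [← l1norm_eq_sum hy, ← l1norm_eq_sum hlam] at hsplit
  have hnormalized : 0 ≤ Idiv (fun j => y j / l1norm y) (fun j => lam j / l1norm lam) :=
    Idiv_nonneg (fun j => div_nonneg (hy j) hYpos.le) (fun j => div_nonneg (hlam j) hLpos.le)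
      fun j hj => by rw [hsupp j ((div_eq_zero_iff.mp hj).resolve_right hLpos.ne'), zero_div]
  have hmass := scalarIdiv_nonneg hYpos.le hLpos.le fun h => absurd h hLpos.ne'
  refine ⟨?_, ?_⟩
  · rw [le_div_iff₀ hYpos]
    linarith
  · have := mul_nonneg hYpos.le hnormalized
    rw [scalarIdiv] at hsplit
    linarith

/-- Lemma 1: if `I(y‖λ) ≤ ε` then `I(y/Y ‖ λ/Λ) ≤ ε/Y` and `I(Y‖Λ) ≤ ε`, where `Y = ‖y‖₁`,
`Λ = ‖λ‖₁`, and `I(Y‖Λ) = Y·log(Y/Λ) + Λ − Y` is the scalar I-divergence. -/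
theorem Idiv_bounds {M : ℕ} (y lam : Fin M → ℝ)
    (hy : ∀ j, 0 ≤ y j) (hlam : ∀ j, 0 ≤ lam j)
    (hy0 : y ≠ 0) (hlam0 : lam ≠ 0)
    (hsupp : ∀ j, lam j = 0 → y j = 0)
    (ε : ℝ) (hε : 0 < ε)
    (h : Idiv y lam ≤ ε) :
    Idiv (fun j => y j / l1norm y) (fun j => lam j / l1norm lam) ≤ ε / l1norm y ∧
      l1norm y * Real.log (l1norm y / l1norm lam) + l1norm lam - l1norm y ≤ ε :=
  Idiv_bounds_general y lam hy hlam hy0 hlam0 hsupp ε h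
end
end

section
/- Let y, λ ∈ ℝ₊^M with y ≠ 0, λ ≠ 0, and supp(y) ⊆ supp(λ); set Y = ‖y‖₁. Let ε > 0 and suppose I(y‖λ) ≤ ε. Define G(z) = (1 + √(2z))·(z + log(1 + √(2z)) − √(2z)) / √(2z) for z > 0. Then ‖y − λ‖₁ ≤ 2√(2εY) + Y·G(2ε/Y). -/
noncomputable section

/-- The auxiliary function `G` from the paper. -/
def Gfun (z : ℝ) : ℝ :=
  (1 + Real.sqrt (2 * z)) * (z + Real.log (1 + Real.sqrt (2 * z)) - Real.sqrt (2 * z)) /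
    Real.sqrt (2 * z)


lemma aux_log (c a l : ℝ) (hc : 0 < c) (ha : 0 < a) (hl : 0 < l) :
    a + a * Real.log c + a * Real.log l - a * Real.log a ≤ c * l := by
  have h := Real.log_le_sub_one_of_pos (show (0:ℝ) < c * l / a by positivity)
  rw [Real.log_div (by positivity) ha.ne', Real.log_mul hc.ne' hl.ne'] at h
  have h2 := mul_le_mul_of_nonneg_left h ha.le
  have h3 : a * (c * l / a - 1) = c * l - a := by field_simp
  linarith [h2, h3]

lemma poly_nonneg (v : ℝ) (hv : 0 ≤ v) :
    0 ≤ 384*v^3+912*v^4+1440*v^5+1800*v^6+1752*v^7+1296*v^8+716*v^9+286*v^10+78*v^11+13*v^12+v^13 := by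
  have h := fun n => pow_nonneg hv n
  linarith [h 3, h 4, h 5, h 6, h 7, h 8, h 9, h 10, h 11, h 12, h 13]

lemma keyA (w s : ℝ) (hw : 1 ≤ w) (hs : 0 < s) (hws : w^4 = 1 + 2*s) :
    s^2/4 + s/(1+s) + s ≤ 5/4*s^2/(1+s) + s^2/2 + 4 - 4/w := by
  have hw0 : (0:ℝ) < w := by linarith
  have hs' : s = (w^4 - 1)/2 := by linarith
  subst hs'
  have h1s : (0:ℝ) < 1 + (w^4-1)/2 := by nlinarith
  rw [← sub_nonneg]
  have key : 5/4*((w^4-1)/2)^2/(1+(w^4-1)/2) + ((w^4-1)/2)^2/2 + 4 - 4/w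
      - (((w^4-1)/2)^2/4 + ((w^4-1)/2)/(1+(w^4-1)/2) + (w^4-1)/2)
      = (384*(w-1)^3+912*(w-1)^4+1440*(w-1)^5+1800*(w-1)^6+1752*(w-1)^7+1296*(w-1)^8
          +716*(w-1)^9+286*(w-1)^10+78*(w-1)^11+13*(w-1)^12+(w-1)^13) / (16*w*(w^4+1)) := by
    have h4 : (w^4+1:ℝ) ≠ 0 := by positivity
    have h5 : (1:ℝ) + (w^4-1)/2 = (w^4+1)/2 := by ring
    rw [h5]
    field_simp
    ring
  rw [key]
  exact div_nonneg (poly_nonneg (w-1) (by linarith)) (by positivity)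

lemma sqrt2_ge : (5/4:ℝ) ≤ Real.sqrt 2 := by
  nlinarith [Real.sq_sqrt (by norm_num : (0:ℝ) ≤ 2), Real.sqrt_nonneg 2]

lemma scalarB (s : ℝ) (hs : 0 < s) :
    s^2/4 - (s/(1+s) - Real.log (1+s)) ≤
      Real.sqrt 2 * s^2/(1+s) + s^2/2 + Real.log (1+s) - s := by
  have h1s : (0:ℝ) < 1 + s := by linarith
  have hid : s - s/(1+s) = s^2/(1+s) := by field_simp; ring
  rw [← sub_nonneg]
  have expand : Real.sqrt 2 * s^2/(1+s) + s^2/2 + Real.log (1+s) - s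
      - (s^2/4 - (s/(1+s) - Real.log (1+s)))
      = ((Real.sqrt 2 - 1)*s^2 + s^2*(1+s)/4)/(1+s) := by
    field_simp
    ring
  rw [expand]
  apply div_nonneg ?_ h1s.le
  nlinarith [sqrt2_ge, sq_nonneg s, hs]

lemma scalarA (s : ℝ) (hs : 0 < s) :
    s^2/4 - (Real.log (1 + s/(1+s)) - s/(1+s)) ≤
      Real.sqrt 2 * s^2/(1+s) + s^2/2 + Real.log (1+s) - s := by
  have h1s : (0:ℝ) < 1 + s := by linarith
  set w := Real.sqrt (Real.sqrt (1+2*s)) with hwdef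
  have hw2 : w^2 = Real.sqrt (1+2*s) := Real.sq_sqrt (Real.sqrt_nonneg _)
  have hw4 : w^4 = 1 + 2*s := by
    have : w^4 = (w^2)^2 := by ring
    rw [this, hw2, Real.sq_sqrt (by linarith)]
  have hw1 : 1 ≤ w := by
    by_contra hcon
    push_neg at hcon
    have := pow_lt_one₀ (Real.sqrt_nonneg _) hcon (by norm_num : (4:ℕ) ≠ 0)
    rw [hw4] at this; linarith
  have hw0 : (0:ℝ) < w := by linarith
  have hlogw : 1 - w⁻¹ ≤ Real.log w := by
    have h := Real.log_le_sub_one_of_pos (show (0:ℝ) < w⁻¹ by positivity)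
    rw [Real.log_inv] at h; linarith
  have hlog2s : Real.log (1+2*s) = 4 * Real.log w := by
    rw [← hw4, Real.log_pow]; push_cast; ring
  have hsum : Real.log (1 + s/(1+s)) + Real.log (1+s) = Real.log (1+2*s) := by
    rw [← Real.log_mul (by positivity) h1s.ne']
    congr 1
    field_simp; ring
  have hkey := keyA w s hw1 hs hw4
  have hc : 5/4*s^2/(1+s) ≤ Real.sqrt 2 * s^2/(1+s) := by
    gcongr
    exact sqrt2_ge
  have hinv : 4/w = 4 * w⁻¹ := by rw [div_eq_mul_inv]
  linarith [hkey, hc, hlogw, hlog2s, hsum]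

lemma pointwise (s : ℝ) (hs : 0 < s) (a l : ℝ) (ha : 0 ≤ a) (hl : 0 ≤ l)
    (hsupp : l = 0 → a = 0) :
    min (Real.log (1 + s/(1+s)) - s/(1+s)) (s/(1+s) - Real.log (1+s)) * a
      + s/(1+s) * |a - l| ≤ a * Real.log (a / l) + l - a := by
  have h1s : (0:ℝ) < 1 + s := by linarith
  have hk0 : 0 < s/(1+s) := by positivity
  have hk1 : s/(1+s) < 1 := by rw [div_lt_one h1s]; linarith
  rcases le_or_gt l a with hcase | hcase
  · -- A side : l ≤ a
    rw [abs_of_nonneg (by linarith)]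
    have hmin : min (Real.log (1 + s/(1+s)) - s/(1+s)) (s/(1+s) - Real.log (1+s)) * a
        ≤ (Real.log (1 + s/(1+s)) - s/(1+s)) * a :=
      mul_le_mul_of_nonneg_right (min_le_left _ _) ha
    rcases eq_or_lt_of_le ha with h0 | hapos
    · have hl0 : l = 0 := le_antisymm (by linarith) hl
      rw [← h0, hl0]
      simp
    · have hlpos : 0 < l := by
        rcases eq_or_lt_of_le hl with h0 | h
        · exact absurd (hsupp h0.symm) (ne_of_gt hapos)
        · exact h
      have haux := aux_log (1 + s/(1+s)) a l (by positivity) hapos hlpos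
      rw [Real.log_div hapos.ne' hlpos.ne']
      linarith [hmin, haux]
  · -- B side : a < l
    rw [abs_of_nonpos (by linarith)]
    have hmin : min (Real.log (1 + s/(1+s)) - s/(1+s)) (s/(1+s) - Real.log (1+s)) * a
        ≤ (s/(1+s) - Real.log (1+s)) * a :=
      mul_le_mul_of_nonneg_right (min_le_right _ _) ha
    have hlpos : 0 < l := by linarith
    rcases eq_or_lt_of_le ha with h0 | hapos
    · rw [← h0]
      simp only [zero_mul, mul_zero, add_zero, zero_add, sub_zero, neg_zero, zero_sub, mul_neg,
        neg_neg]
      nlinarith [hk1, hlpos]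
    · have haux := aux_log (1/(1+s)) a l (by positivity) hapos hlpos
      have hloginv : Real.log (1/(1+s)) = -Real.log (1+s) := by
        rw [one_div, Real.log_inv]
      rw [hloginv] at haux
      have hone : (1:ℝ)/(1+s) * l = l - s/(1+s) * l := by field_simp; ring
      rw [Real.log_div hapos.ne' hlpos.ne']
      linarith [hmin, haux, hone]

/-- Lemma 4: if `I(y‖λ) ≤ ε` then `‖y − λ‖₁ ≤ 2√(2εY) + Y·G(2ε/Y)`, where `Y = ‖y‖₁`. -/
theorem l1_difference_bound {M : ℕ} (y lam : Fin M → ℝ)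
    (hy : ∀ j, 0 ≤ y j) (hlam : ∀ j, 0 ≤ lam j)
    (hy0 : y ≠ 0) (hlam0 : lam ≠ 0)
    (hsupp : ∀ j, lam j = 0 → y j = 0)
    (ε : ℝ) (hε : 0 < ε)
    (h : Idiv y lam ≤ ε) :
    l1norm (fun j => y j - lam j) ≤
      2 * Real.sqrt (2 * ε * l1norm y) + l1norm y * Gfun (2 * ε / l1norm y) := by
  have hYdef : l1norm y = ∑ j, y j :=
    Finset.sum_congr rfl (fun j _ => abs_of_nonneg (hy j))
  have hYpos : 0 < l1norm y := by
    obtain ⟨j0, hj0⟩ := Function.ne_iff.mp hy0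
    rw [hYdef]
    exact Finset.sum_pos' (fun j _ => hy j)
      ⟨j0, Finset.mem_univ _, lt_of_le_of_ne (hy j0) (Ne.symm hj0)⟩
  set Y := l1norm y with hYset
  set s := 2 * Real.sqrt (ε / Y) with hsdef
  have hspos : 0 < s := by
    have : 0 < Real.sqrt (ε / Y) := Real.sqrt_pos.mpr (div_pos hε hYpos)
    rw [hsdef]; linarith
  have h1s : (0:ℝ) < 1 + s := by linarith
  have hs2 : s^2 = 4 * (ε / Y) := by
    rw [hsdef, mul_pow, Real.sq_sqrt (div_pos hε hYpos).le]; ring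
  have hεs : ε = Y * s^2 / 4 := by
    rw [hs2]; field_simp
  have hsqrtA : Real.sqrt (2 * ε * Y) = Y * s * Real.sqrt 2 / 2 := by
    have h2 : (Real.sqrt 2)^2 = 2 := Real.sq_sqrt (by norm_num)
    have h1 : 2 * ε * Y = (Y * s * Real.sqrt 2 / 2)^2 := by
      linear_combination 2*Y*hεs - Y^2*s^2/4*h2
    rw [h1, Real.sqrt_sq (by positivity)]
  have hz : 2 * ε / Y = s^2 / 2 := by rw [hεs]; field_simp; ring
  have hsqrtz : Real.sqrt (2 * (2 * ε / Y)) = s := by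
    rw [hz, show 2 * (s^2/2) = s^2 by ring, Real.sqrt_sq hspos.le]
  have hG : Gfun (2 * ε / Y) = (1 + s) * (s^2/2 + Real.log (1 + s) - s) / s := by
    unfold Gfun
    rw [hsqrtz, hz]
  set k := s / (1 + s) with hkdef
  have hkpos : 0 < k := by rw [hkdef]; positivity
  set c := min (Real.log (1 + k) - k) (k - Real.log (1 + s)) with hcdef
  have hsum : c * Y + k * l1norm (fun j => y j - lam j) ≤ ε := by
    have hpt : ∀ j ∈ Finset.univ, c * y j + k * |y j - lam j|
        ≤ y j * Real.log (y j / lam j) + lam j - y j :=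
      fun j _ => pointwise s hspos (y j) (lam j) (hy j) (hlam j) (hsupp j)
    calc c * Y + k * l1norm (fun j => y j - lam j)
        = ∑ j, (c * y j + k * |y j - lam j|) := by
          rw [hYdef]
          unfold l1norm
          rw [Finset.sum_add_distrib, Finset.mul_sum, Finset.mul_sum]
      _ ≤ ∑ j, (y j * Real.log (y j / lam j) + lam j - y j) := Finset.sum_le_sum hpt
      _ = Idiv y lam := rfl
      _ ≤ ε := h
  have hkRHS : k * (2 * Real.sqrt (2 * ε * Y) + Y * Gfun (2 * ε / Y))
      = Y * (Real.sqrt 2 * s^2/(1+s) + s^2/2 + Real.log (1+s) - s) := by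
    rw [hsqrtA, hG, hkdef]
    field_simp
    ring
  have hfin : ε - c * Y ≤ k * (2 * Real.sqrt (2 * ε * Y) + Y * Gfun (2 * ε / Y)) := by
    rw [hkRHS]
    rcases min_cases (Real.log (1 + k) - k) (k - Real.log (1 + s)) with ⟨hmin, _⟩ | ⟨hmin, _⟩ <;>
      rw [hcdef, hmin]
    · have := mul_le_mul_of_nonneg_left (scalarA s hspos) hYpos.le
      rw [hkdef]
      nlinarith [this, hεs]
    · have := mul_le_mul_of_nonneg_left (scalarB s hspos) hYpos.le
      rw [hkdef]
      nlinarith [this, hεs]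
  calc l1norm (fun j => y j - lam j)
      ≤ 2 * Real.sqrt (2 * ε * Y) + Y * Gfun (2 * ε / Y) :=
        le_of_mul_le_mul_left (by linarith [hsum, hfin]) hkpos
    _ = _ := rfl
end
end

section
/- Let Y > 0 and Λ > 0 with Λ < Y, and suppose the scalar I-divergence satisfies I(Y‖Λ) = Y·log(Y/Λ) + Λ − Y ≤ ε for some ε > 0. Then Y − Λ ≤ √(2εY). -/
open Finset in
theorem Real.add_sq_div_two_le_neg_log_one_sub {u : ℝ} (hu₀ : 0 ≤ u) (hu₁ : u < 1) :
    u + u ^ 2 / 2 ≤ -Real.log (1 - u) := by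
  have hsum := Real.hasSum_pow_div_log_of_abs_lt_one (abs_lt.2 ⟨by linarith, hu₁⟩)
  have hpartial := sum_le_hasSum (range 2) (fun n _ ↦ by positivity) hsum
  norm_num [sum_range_succ] at hpartial
  exact hpartial

/-- With `u = 1 - Λ / Y`, the divergence is `Y (-log (1 - u) - u) ≥ Y u² / 2 = (Y - Λ)² / (2 Y)`. -/
theorem scalar_Idiv_lower_tail_general (Y Λ ε : ℝ) (hY : 0 < Y) (hΛ : 0 < Λ) (hΛY : Λ < Y)
    (h : Y * Real.log (Y / Λ) + Λ - Y ≤ ε) :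
    Y - Λ ≤ Real.sqrt (2 * ε * Y) := by
  set u := 1 - Λ / Y with hu
  have hu₀ : 0 ≤ u := sub_nonneg.2 ((div_le_one hY).2 hΛY.le)
  have hu₁ : u < 1 := by rw [hu]; linarith [div_pos hΛ hY]
  have hlog : Real.log (Y / Λ) = -Real.log (1 - u) := by
    rw [hu, sub_sub_cancel, ← Real.log_inv, inv_div]
  have hbound := mul_le_mul_of_nonneg_left
    (Real.add_sq_div_two_le_neg_log_one_sub hu₀ hu₁) hY.le
  have hexpand : Y * (u + u ^ 2 / 2) = (Y - Λ) + (Y - Λ) ^ 2 / (2 * Y) := by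
    rw [hu]; field_simp
  have hsq : (Y - Λ) ^ 2 ≤ 2 * ε * Y := by
    have : (Y - Λ) ^ 2 / (2 * Y) ≤ ε := by rw [hlog] at h; linarith
    rw [div_le_iff₀ (by positivity)] at this
    linarith
  exact Real.le_sqrt_of_sq_le hsq

/-- Case 2 in the proof of Lemma 3: for `0 < Λ < Y` with scalar I-divergence
`Y·log(Y/Λ) + Λ − Y ≤ ε`, one has `Y − Λ ≤ √(2εY)`. -/
theorem scalar_Idiv_lower_tail (Y Λ ε : ℝ) (hY : 0 < Y) (hΛ : 0 < Λ) (hΛY : Λ < Y)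
    (hε : 0 < ε) (h : Y * Real.log (Y / Λ) + Λ - Y ≤ ε) :
    Y - Λ ≤ Real.sqrt (2 * ε * Y) :=
  scalar_Idiv_lower_tail_general Y Λ ε hY hΛ hΛY h
end

section
/- Let t ≥ 0 and z > 0 be real numbers satisfying t ≤ z + log(1 + t). Then t ≤ √(2z) + G(z), where G(z) = (1 + √(2z))·(z + log(1 + √(2z)) − √(2z)) / √(2z). -/
/-! `log (1 + t)` lies below its tangent line at any point `s > 0`; substituting this into
`t ≤ z + log (1 + t)` leaves a linear inequality in `t`, which gives
`t ≤ ((1 + s) * (z + log (1 + s)) - s) / s`. The choice `s = √(2z)` turns this bound into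
`√(2z) + G(z)`. -/

noncomputable section

theorem Real.log_le_log_add_sub_div {x y : ℝ} (hx : 0 < x) (hy : 0 < y) :
    Real.log x ≤ Real.log y + (x - y) / y := by
  have h := Real.log_le_sub_one_of_pos (div_pos hx hy)
  rw [Real.log_div hx.ne' hy.ne', div_sub_one hy.ne'] at h
  linarith

theorem le_div_of_le_add_log_one_add {t z s : ℝ} (ht : -1 < t) (hs : 0 < s)
    (h : t ≤ z + Real.log (1 + t)) :
    t ≤ ((1 + s) * (z + Real.log (1 + s)) - s) / s := by
  have h1s : 0 < 1 + s := by linarith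
  have htangent : t ≤ z + Real.log (1 + s) + (t - s) / (1 + s) := by
    have := Real.log_le_log_add_sub_div (x := 1 + t) (by linarith) h1s
    rw [add_sub_add_left_eq_sub] at this
    linarith
  rw [le_div_iff₀ hs]
  have hmul := mul_le_mul_of_nonneg_right htangent h1s.le
  rw [add_mul, div_mul_cancel₀ _ h1s.ne'] at hmul
  linarith

/-- If `t ≥ 0`, `z > 0` and `t ≤ z + log(1 + t)`, then `t ≤ √(2z) + G(z)`. -/
theorem le_sqrt_add_Gfun (t z : ℝ) (ht : 0 ≤ t) (hz : 0 < z)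
    (h : t ≤ z + Real.log (1 + t)) :
    t ≤ Real.sqrt (2 * z) + Gfun z := by
  have hs : 0 < Real.sqrt (2 * z) := Real.sqrt_pos.2 (by linarith)
  convert le_div_of_le_add_log_one_add (by linarith) hs h using 1
  rw [Gfun]
  field_simp
  ring
end
end

section
/- Let ψ be a Poisson random variable with mean Λ > 0 and let k > 0. Then P( Λ ≤ ψ + k²/2 + √(k²ψ + k⁴/4) ) ≥ 1 − 1/(1 + k²). -/
/-!
A Poisson variable has mean and variance both equal to `Λ`. The event in question is
`√Λ ≤ √(ψ + k²/4) + k/2`, which holds as soon as `Λ - k√Λ ≤ ψ`; so its complement lies in the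
lower tail `{ψ ≤ Λ - k√Λ}`, whose probability Cantelli's one-sided Chebyshev inequality bounds by
`Λ / (Λ + k²Λ) = 1 / (1 + k²)`.
-/

open MeasureTheory ProbabilityTheory Real
open scoped NNReal ENNReal Nat

lemma le_add_sq_div_two_add_sqrt_of_sub_mul_sqrt_le {a c x : ℝ} (ha : 0 ≤ a) (hc : 0 ≤ c)
    (h : a - c * √a ≤ x) : a ≤ x + c ^ 2 / 2 + √(c ^ 2 * x + c ^ 4 / 4) := by
  have hsq : (√a - c / 2) ^ 2 ≤ x + c ^ 2 / 4 := by nlinarith [Real.sq_sqrt ha]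
  have hy : 0 ≤ x + c ^ 2 / 4 := (sq_nonneg _).trans hsq
  have hroot : √a ≤ √(x + c ^ 2 / 4) + c / 2 := by
    linarith [le_abs_self (√a - c / 2), Real.abs_le_sqrt hsq]
  have hfactor : √(c ^ 2 * x + c ^ 4 / 4) = c * √(x + c ^ 2 / 4) := by
    rw [show c ^ 2 * x + c ^ 4 / 4 = c ^ 2 * (x + c ^ 2 / 4) by ring,
      Real.sqrt_mul' _ hy, Real.sqrt_sq hc]
  rw [hfactor]
  nlinarith [Real.sq_sqrt ha, Real.sq_sqrt hy, Real.sqrt_nonneg a]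

section Cantelli

variable {Ω : Type*} {mΩ : MeasurableSpace Ω} {μ : Measure Ω} [IsProbabilityMeasure μ]
  {X : Ω → ℝ}

lemma integral_sq_integral_sub_add (hX : MemLp X 2 μ) (u : ℝ) :
    ∫ ω, (μ[X] - X ω + u) ^ 2 ∂μ = Var[X; μ] + u ^ 2 := by
  have hXi := hX.integrable one_le_two
  have hXm := hX.1
  have hY : MemLp (fun ω ↦ μ[X] - X ω + u) 2 μ := ((memLp_const _).sub hX).add (memLp_const _)
  have hmean : μ[fun ω ↦ μ[X] - X ω + u] = u := by
    rw [integral_add (by fun_prop) (by fun_prop), integral_sub (by fun_prop) hXi]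
    simp
  have hvar : Var[fun ω ↦ μ[X] - X ω + u; μ] = Var[X; μ] := by
    rw [variance_add_const (by fun_prop) u, variance_const_sub hXm]
  have hsecond := variance_eq_sub hY
  rw [hvar, hmean] at hsecond
  rw [hsecond]
  simp [Pi.pow_apply]

lemma meas_le_integral_sub_le_variance_add_sq_div (hX : MemLp X 2 μ) {t u : ℝ} (ht : 0 < t)
    (hu : 0 ≤ u) :
    μ {ω | X ω ≤ μ[X] - t} ≤ ENNReal.ofReal ((Var[X; μ] + u ^ 2) / (t + u) ^ 2) := by
  set Y : Ω → ℝ := fun ω ↦ (μ[X] - X ω + u) ^ 2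
  have hY : Integrable Y μ := (((memLp_const _).sub hX).add (memLp_const _)).integrable_sq
  have hsub : {ω | X ω ≤ μ[X] - t} ⊆ {ω | (t + u) ^ 2 ≤ Y ω} := fun ω hω ↦ by
    have : t + u ≤ μ[X] - X ω + u := by
      rw [Set.mem_ofPred_eq] at hω
      linarith
    exact pow_le_pow_left₀ (by linarith) this 2
  have hmarkov : (t + u) ^ 2 * μ.real {ω | (t + u) ^ 2 ≤ Y ω} ≤ Var[X; μ] + u ^ 2 :=
    integral_sq_integral_sub_add hX u ▸
      mul_meas_ge_le_integral_of_nonneg (.of_forall fun ω ↦ sq_nonneg _) hY _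
  calc μ {ω | X ω ≤ μ[X] - t} ≤ μ {ω | (t + u) ^ 2 ≤ Y ω} := measure_mono hsub
    _ = ENNReal.ofReal (μ.real {ω | (t + u) ^ 2 ≤ Y ω}) :=
      (ofReal_measureReal (measure_ne_top _ _)).symm
    _ ≤ _ := ENNReal.ofReal_le_ofReal <| by
      rw [le_div_iff₀ (by positivity)]
      linarith

/-- Cantelli's inequality: the shift `u = Var[X] / t` minimises the bound above. -/
lemma meas_le_integral_sub_le_variance_div (hX : MemLp X 2 μ) {t : ℝ} (ht : 0 < t) :
    μ {ω | X ω ≤ μ[X] - t} ≤ ENNReal.ofReal (Var[X; μ] / (Var[X; μ] + t ^ 2)) := by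
  have hv := variance_nonneg X μ
  convert meas_le_integral_sub_le_variance_add_sq_div hX ht (div_nonneg hv ht.le) using 2
  field_simp
  ring

end Cantelli

section PoissonMoments

/-- `n · p_r(n) = r · p_r(n - 1)` for the Poisson weights `p_r`, so multiplying by `n` shifts
the series by one. -/
lemma hasSum_poisson_mul_natCast_mul {r : ℝ≥0} {g : ℕ → ℝ} {a : ℝ}
    (h : HasSum (fun n ↦ rexp (-r) * r ^ n / n ! * g (n + 1)) a) :
    HasSum (fun n ↦ rexp (-r) * r ^ n / n ! * (n * g n)) (r * a) := by
  refine (hasSum_nat_add_iff' 1).mp ?_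
  simp only [Finset.range_one, Finset.sum_singleton, Nat.cast_zero, zero_mul, mul_zero, sub_zero]
  have hshift : ∀ n : ℕ, rexp (-r) * r ^ (n + 1) / (n + 1)! * ((n + 1 : ℕ) * g (n + 1)) =
      r * (rexp (-r) * r ^ n / n ! * g (n + 1)) := fun n ↦ by
    rw [Nat.factorial_succ]
    push_cast
    field_simp
    ring
  simpa only [hshift] using h.mul_left (r : ℝ)

lemma hasSum_poisson_mul_natCast (r : ℝ≥0) :
    HasSum (fun n ↦ rexp (-r) * r ^ n / n ! * n) r := by
  have := hasSum_poisson_mul_natCast_mul (g := 1) (by simpa using hasSum_one_poissonMeasure r)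
  simpa using this

lemma hasSum_poisson_mul_natCast_sq (r : ℝ≥0) :
    HasSum (fun n ↦ rexp (-r) * r ^ n / n ! * n ^ 2) (r ^ 2 + r) := by
  have := hasSum_poisson_mul_natCast_mul (g := fun n ↦ n)
    (by simpa [mul_add] using (hasSum_poisson_mul_natCast r).add (hasSum_one_poissonMeasure r))
  convert this using 2 <;> ring

lemma memLp_natCast_poissonMeasure (r : ℝ≥0) : MemLp (fun n : ℕ ↦ (n : ℝ)) 2 Po(r) :=
  (memLp_two_iff_integrable_sq .of_discrete).2 <| integrable_poissonMeasure_iff.2 <| by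
    simpa using (hasSum_poisson_mul_natCast_sq r).summable

lemma integral_natCast_poissonMeasure (r : ℝ≥0) : ∫ n, (n : ℝ) ∂Po(r) = r := by
  simpa [integral_poissonMeasure] using (hasSum_poisson_mul_natCast r).tsum_eq

lemma variance_natCast_poissonMeasure (r : ℝ≥0) : Var[fun n : ℕ ↦ (n : ℝ); Po(r)] = r := by
  rw [variance_eq_sub (memLp_natCast_poissonMeasure r), integral_natCast_poissonMeasure]
  simp only [Pi.pow_apply, integral_poissonMeasure, smul_eq_mul,
    (hasSum_poisson_mul_natCast_sq r).tsum_eq]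
  ring

end PoissonMoments

/-- One-sided Chebyshev bound for a Poisson random variable `ψ` with mean `Λ > 0`:
`P( Λ ≤ ψ + k²/2 + √(k²ψ + k⁴/4) ) ≥ 1 − 1/(1 + k²)`. -/
theorem poisson_mean_upper_confidence (Λ : ℝ) (hΛ : 0 < Λ) (k : ℝ) (hk : 0 < k) :
    ENNReal.ofReal (1 - 1 / (1 + k ^ 2)) ≤
      poissonMeasure Λ.toNNReal
        {n : ℕ | Λ ≤ (n : ℝ) + k ^ 2 / 2 + Real.sqrt (k ^ 2 * n + k ^ 4 / 4)} := by
  set S := {n : ℕ | Λ ≤ (n : ℝ) + k ^ 2 / 2 + Real.sqrt (k ^ 2 * n + k ^ 4 / 4)}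
  have hr : ((Λ.toNNReal : ℝ≥0) : ℝ) = Λ := Real.coe_toNNReal Λ hΛ.le
  have hcompl : Sᶜ ⊆ {n : ℕ | (n : ℝ) ≤ ∫ m, (m : ℝ) ∂Po(Λ.toNNReal) - k * √Λ} := fun n hn ↦ by
    rw [Set.mem_ofPred_eq, integral_natCast_poissonMeasure, hr]
    by_contra h
    exact hn (le_add_sq_div_two_add_sqrt_of_sub_mul_sqrt_le hΛ.le hk.le (not_le.1 h).le)
  have hbound : Po(Λ.toNNReal) Sᶜ ≤ ENNReal.ofReal (1 / (1 + k ^ 2)) := by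
    refine (measure_mono hcompl).trans ((meas_le_integral_sub_le_variance_div
      (memLp_natCast_poissonMeasure _) (by positivity)).trans_eq ?_)
    rw [variance_natCast_poissonMeasure, hr, mul_pow, Real.sq_sqrt hΛ.le]
    congr 1
    field_simp
  calc ENNReal.ofReal (1 - 1 / (1 + k ^ 2)) = 1 - ENNReal.ofReal (1 / (1 + k ^ 2)) := by
        rw [ENNReal.ofReal_sub _ (by positivity), ENNReal.ofReal_one]
    _ ≤ 1 - Po(Λ.toNNReal) Sᶜ := tsub_le_tsub_left hbound 1
    _ = Po(Λ.toNNReal) S := by rw [← prob_compl_eq_one_sub .of_discrete, compl_compl]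
end
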